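/- Every irreducible finite-dimensional complex representation of a product G × H of two finite groups is isomorphic to an external tensor product V ⊠ W, where V is an irreducible representation of G and W is an irreducible representation of H. -/

import Mathlib

/-- A representation is irreducible if the space is nonzero and the only
invariant submodules are `⊥` and `⊤`. -/
def Representation.IsIrreducible' {k G V : Type*} [CommSemiring k] [Monoid G]
    [AddCommMonoid V] [Module k V] (ρ : Representation k G V) : Prop :=
  Nontrivial V ∧ ∀ U : Submodule k V, (∀ (g : G), ∀ v ∈ U, ρ g v ∈ U) → U = ⊥ ∨ U = ⊤

/-- Two representations are isomorphic if there is an equivariant linear equivalence. -/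
def Representation.Iso {k G V W : Type*} [CommSemiring k] [Monoid G] [AddCommMonoid V]
    [Module k V] [AddCommMonoid W] [Module k W] (ρ : Representation k G V)
    (σ : Representation k G W) : Prop :=
  ∃ e : V ≃ₗ[k] W, ∀ (g : G) (v : V), e (ρ g v) = σ g (e v)

/-- The external tensor product of a representation of `G` and a representation of `H`:
the vector space `V ⊗ W` with `(g, h)` acting by `g ⊗ h`. -/
noncomputable def Representation.extTprod {k G H V W : Type*} [CommSemiring k] [Monoid G] [Monoid H]
    [AddCommMonoid V] [Module k V] [AddCommMonoid W] [Module k W]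
    (σ : Representation k G V) (τ : Representation k H W) :
    Representation k (G × H) (TensorProduct k V W) :=
  Representation.tprod (σ.comp (MonoidHom.fst G H)) (τ.comp (MonoidHom.snd G H))

/-!
Restrict `ρ` to `G` and choose an irreducible `G`-subrepresentation `V ⊆ M`. The group `H` acts
on the multiplicity space `W = Hom_G(V, M)` by postcomposition, and evaluation `v ⊗ f ↦ f v`
intertwines `V ⊠ W` with `M`. Its image is a nonzero subrepresentation, hence all of `M`.
For injectivity, Schur's lemma turns composition into a pairing `Hom_G(M, V) × W → ℂ`,
`p ∘ f = ⟨p, f⟩ • id_V`. By Maschke every nonzero `f` has an equivariant left inverse `p`, so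
`⟨p, f⟩ = 1`; hence every linear form on `W` is some `⟨p, -⟩`, and `p ∘ eval = id_V ⊗ ⟨p, -⟩`
kills the kernel of evaluation. Finally, an `H`-subrepresentation `U ⊆ W` yields the
subrepresentation `V ⊗ U` of `V ⊠ W`, of dimension `dim V · dim U`, so `W` is irreducible.
-/

open Module TensorProduct

theorem TensorProduct.eq_zero_of_forall_rid_lTensor_eq_zero {R V W : Type*} [CommRing R]
    [AddCommGroup V] [Module R V] [AddCommGroup W] [Module R W] [Module.Free R W]
    (x : V ⊗[R] W) (h : ∀ φ : Dual R W, TensorProduct.rid R V (φ.lTensor V x) = 0) : x = 0 := by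
  classical
  let b := Module.Free.chooseBasis R W
  have hcoord : ∀ i y,
      equivFinsuppOfBasisRight b y i = TensorProduct.rid R V ((b.coord i).lTensor V y) := by
    intro i y
    induction y using TensorProduct.induction_on with
    | zero => simp
    | tmul v w => simp
    | add y z hy hz => simp [hy, hz]
  apply (equivFinsuppOfBasisRight b).injective
  ext i
  simp [hcoord, h]

section Subrepresentation

variable {k G V : Type*} [Field k] [Monoid G] [AddCommGroup V] [Module k V]
  {ρ : Representation k G V}

instance [Nontrivial V] : Nontrivial (Subrepresentation ρ) :=
  ⟨⊥, ⊤, fun h => bot_ne_top congr(($h).toSubmodule)⟩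

instance [FiniteDimensional k V] : IsAtomic (Subrepresentation ρ) :=
  have : WellFoundedLT (Subrepresentation ρ) :=
    StrictMono.wellFoundedLT (f := fun S : Subrepresentation ρ => S.toSubmodule) fun _ _ h => h
  isAtomic_of_orderBot_wellFounded_lt wellFounded_lt

theorem Subrepresentation.isIrreducible'_toRepresentation_of_isAtom {S : Subrepresentation ρ}
    (hS : IsAtom S) : S.toRepresentation.IsIrreducible' := by
  refine ⟨Submodule.nontrivial_iff_ne_bot.mpr fun h => hS.1 (toSubmodule_injective h),
    fun U hU => ?_⟩
  let U' : Subrepresentation ρ :=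
    ⟨U.map S.toSubmodule.subtype, by
      rintro g _ ⟨u, hu, rfl⟩
      exact ⟨_, hU g u hu, rfl⟩⟩
  have hle : U' ≤ S := by
    rintro _ ⟨u, -, rfl⟩
    exact u.2
  refine (hS.le_iff.mp hle).imp (fun h => ?_) (fun h => ?_) <;>
    apply Submodule.map_injective_of_injective S.toSubmodule.injective_subtype
  · rw [Submodule.map_bot]
    exact congr(($h).toSubmodule)
  · rw [Submodule.map_subtype_top]
    exact congr(($h).toSubmodule)

def Subrepresentation.subtype (S : Subrepresentation ρ) :
    Representation.IntertwiningMap S.toRepresentation ρ :=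
  ⟨S.toSubmodule.subtype, fun _ => rfl⟩

end Subrepresentation

namespace Representation

section Field

variable {k G V W : Type*} [Field k] [Monoid G] [AddCommGroup V] [Module k V]
  [AddCommGroup W] [Module k W] {ρ : Representation k G V} {σ : Representation k G W}

theorem IsIrreducible'.isIrreducible (h : ρ.IsIrreducible') : ρ.IsIrreducible := by
  have := h.1
  refine { exists_pair_ne := exists_pair_ne _, eq_bot_or_eq_top := fun U => ?_ }
  rcases h.2 U.toSubmodule U.apply_mem_toSubmodule with hU | hU
  · exact .inl (Subrepresentation.toSubmodule_injective hU)
  · exact .inr (Subrepresentation.toSubmodule_injective hU)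

theorem Equiv.iso (e : ρ.Equiv σ) : ρ.Iso σ :=
  ⟨e.toLinearEquiv, e.toIntertwiningMap.isIntertwining⟩

theorem IsIrreducible'.of_iso (hρ : ρ.IsIrreducible') (e : ρ.Iso σ) : σ.IsIrreducible' := by
  obtain ⟨e, he⟩ := e
  have := hρ.1
  refine ⟨e.toEquiv.symm.nontrivial, fun U hU => ?_⟩
  have hcomap := hρ.2 (U.comap e.toLinearMap) fun g v hv => by simpa [he] using hU g _ hv
  rw [← Submodule.map_comap_eq_of_surjective e.surjective U]
  refine hcomap.imp (fun h => ?_) (fun h => ?_) <;> simp [h]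

end Field

theorem IntertwiningMap.exists_comp_eq_id_of_injective {k G V M : Type*} [Field k] [Group G]
    [Finite G] [NeZero (Nat.card G : k)] [AddCommGroup V] [Module k V] [AddCommGroup M]
    [Module k M] {σ : Representation k G V} {π : Representation k G M}
    (f : IntertwiningMap σ π) (hf : Function.Injective f) :
    ∃ p : IntertwiningMap π σ, p.comp f = id σ := by
  obtain ⟨p, hp⟩ := MonoidAlgebra.exists_leftInverse_of_injective (equivLinearMapAsModule σ π f)
    (LinearMap.ker_eq_bot.mpr hf)
  exact ⟨(equivLinearMapAsModule π σ).symm p, ext congr(($hp).restrictScalars k)⟩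

noncomputable def evalTensor {k G V M : Type*} [CommSemiring k] [Monoid G] [AddCommMonoid V]
    [Module k V] [AddCommMonoid M] [Module k M] (σ : Representation k G V)
    (π : Representation k G M) : V ⊗[k] IntertwiningMap σ π →ₗ[k] M :=
  TensorProduct.lift (IntertwiningMap.toLinearMapl σ π).flip

@[simp] theorem evalTensor_tmul {k G V M : Type*} [CommSemiring k] [Monoid G] [AddCommMonoid V]
    [Module k V] [AddCommMonoid M] [Module k M] (σ : Representation k G V)
    (π : Representation k G M) (v : V) (f : IntertwiningMap σ π) :
    evalTensor σ π (v ⊗ₜ f) = f v := rfl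

section Schur

variable {k G V M : Type*} [Field k] [Monoid G] [AddCommGroup V] [Module k V]
  [AddCommGroup M] [Module k M] [IsAlgClosed k] [FiniteDimensional k V]
  (σ : Representation k G V) (π : Representation k G M) [σ.IsIrreducible]

noncomputable def IsIrreducible.scalarEquiv : k ≃ₗ[k] IntertwiningMap σ σ :=
  .ofBijective (Algebra.linearMap k _)
    IsIrreducible.algebraMap_intertwiningMap_bijective_of_isAlgClosed

noncomputable def schurPairing : IntertwiningMap π σ →ₗ[k] Dual k (IntertwiningMap σ π) :=
  (IntertwiningMap.llcomp σ π σ).compr₂ (IsIrreducible.scalarEquiv σ).symm.toLinearMap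

variable {σ π}

theorem comp_eq_scalarEquiv_schurPairing (p : IntertwiningMap π σ) (f : IntertwiningMap σ π) :
    p.comp f = IsIrreducible.scalarEquiv σ (schurPairing σ π p f) := by
  simp [schurPairing, IntertwiningMap.comp_def]

theorem apply_apply_eq_schurPairing_smul (p : IntertwiningMap π σ) (f : IntertwiningMap σ π)
    (v : V) : p (f v) = schurPairing σ π p f • v :=
  congr(($(comp_eq_scalarEquiv_schurPairing p f)) v)

end Schur

section Maschke

variable {k G V M : Type*} [Field k] [Group G] [Finite G] [NeZero (Nat.card G : k)]
  [AddCommGroup V] [Module k V] [AddCommGroup M] [Module k M] [IsAlgClosed k]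
  [FiniteDimensional k V] [FiniteDimensional k M]
  (σ : Representation k G V) (π : Representation k G M) [σ.IsIrreducible]

theorem schurPairing_surjective : Function.Surjective (schurPairing σ π) := by
  have hsep : ∀ f : IntertwiningMap σ π, f ≠ 0 → ∃ p, schurPairing σ π p f ≠ 0 := by
    intro f hf
    obtain ⟨p, hp⟩ := IntertwiningMap.exists_comp_eq_id_of_injective f
      ((IsIrreducible.injective_or_eq_zero f).resolve_right hf)
    have h1 : schurPairing σ π p f = 1 := (IsIrreducible.scalarEquiv σ).injective <|
      (comp_eq_scalarEquiv_schurPairing p f).symm.trans (hp.trans (map_one (algebraMap k _)).symm)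
    exact ⟨p, h1 ▸ one_ne_zero⟩
  have hbot : (LinearMap.range (schurPairing σ π)).dualCoannihilator = ⊥ := by
    refine (Submodule.eq_bot_iff _).mpr fun f hf => ?_
    by_contra hf0
    obtain ⟨p, hp⟩ := hsep f hf0
    exact hp ((Submodule.mem_dualCoannihilator _).mp hf _ ⟨p, rfl⟩)
  rw [← LinearMap.range_eq_top, ← Subspace.dualCoannihilator_dualAnnihilator_eq
    (W := LinearMap.range _), hbot, Submodule.dualAnnihilator_bot]

theorem evalTensor_injective : Function.Injective (evalTensor σ π) := by
  refine (injective_iff_map_eq_zero _).mpr fun x hx =>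
    eq_zero_of_forall_rid_lTensor_eq_zero x fun φ => ?_
  obtain ⟨p, rfl⟩ := schurPairing_surjective σ π φ
  have hp : p.toLinearMap ∘ₗ evalTensor σ π =
      (_root_.TensorProduct.rid k V).toLinearMap ∘ₗ (schurPairing σ π p).lTensor V :=
    TensorProduct.ext' fun v f => by simp [apply_apply_eq_schurPairing_smul p f v]
  simpa [hx] using congr(($hp) x).symm

end Maschke

section Product

variable {k G H V M : Type*} [CommSemiring k] [Monoid G] [Monoid H] [AddCommMonoid V]
  [Module k V] [AddCommMonoid M] [Module k M] (ρ : Representation k (G × H) M)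
  (σ : Representation k G V)

def multiplicityRep : Representation k H (IntertwiningMap σ (ρ.comp (MonoidHom.inl G H))) where
  toFun h := IntertwiningMap.llcomp _ _ _
    ⟨ρ (1, h), fun g => by simp [← Module.End.mul_eq_comp, ← map_mul]⟩
  map_one' := by ext; simp [← IntertwiningMap.comp_def, Prod.mk_one_one]
  map_mul' h h' := by
    ext f v
    rw [Module.End.mul_apply]
    simp [← IntertwiningMap.comp_def, ← Module.End.mul_apply, ← map_mul]

noncomputable def multiplicityEval :
    IntertwiningMap (σ.extTprod (multiplicityRep ρ σ)) ρ :=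
  (evalTensor σ _).intertwiningMap_of_isIntertwiningMap _ _ fun gh x => by
    induction x using TensorProduct.induction_on with
    | zero => simp
    | tmul v f =>
      simp [extTprod, multiplicityRep, ← IntertwiningMap.comp_def, f.isIntertwining,
        ← Module.End.mul_apply, ← map_mul]
    | add x y hx hy => simp only [map_add, hx, hy]

theorem multiplicityEval_surjective (hρ : ρ.IsIrreducible')
    (f : IntertwiningMap σ (ρ.comp (MonoidHom.inl G H))) (hf : f ≠ 0) :
    Function.Surjective (multiplicityEval ρ σ) := by
  refine LinearMap.range_eq_top.mp
    ((hρ.2 (LinearMap.range (evalTensor σ _)) ?_).resolve_left ?_)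
  · rintro gh _ ⟨x, rfl⟩
    exact ⟨_, IntertwiningMap.isIntertwining _ _ (multiplicityEval ρ σ) gh x⟩
  · obtain ⟨v, hv⟩ := DFunLike.ne_iff.mp hf
    intro h
    have : evalTensor σ _ (v ⊗ₜ f) ∈ LinearMap.range (evalTensor σ _) := ⟨_, rfl⟩
    rw [h, Submodule.mem_bot, evalTensor_tmul] at this
    exact hv this

end Product

theorem IsIrreducible'.of_extTprod_right {k G H V W : Type*} [Field k] [Monoid G] [Monoid H]
    [AddCommGroup V] [Module k V] [AddCommGroup W] [Module k W] [FiniteDimensional k V]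
    [FiniteDimensional k W] {σ : Representation k G V} {τ : Representation k H W}
    (h : (σ.extTprod τ).IsIrreducible') : τ.IsIrreducible' := by
  have := h.1
  have hpos : 0 < finrank k V * finrank k W := by
    rw [← finrank_tensorProduct]; exact finrank_pos
  obtain ⟨hV, hW⟩ := CanonicallyOrderedAdd.mul_pos.mp hpos
  refine ⟨finrank_pos_iff.mp hW, fun U hU => ?_⟩
  let D := LinearMap.range (U.subtype.lTensor V)
  have hD : ∀ gh, ∀ x ∈ D, (σ.extTprod τ) gh x ∈ D := by
    rintro ⟨g, h⟩ _ ⟨y, rfl⟩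
    refine ⟨TensorProduct.map (σ g) ((τ h).restrict (hU h)) y, ?_⟩
    induction y using TensorProduct.induction_on with
    | zero => simp
    | tmul v u => simp [extTprod]
    | add y z hy hz => simp only [map_add, hy, hz]
  have hfin : finrank k D = finrank k V * finrank k U := by
    rw [LinearMap.finrank_range_of_inj
      (Module.Flat.lTensor_preserves_injective_linearMap _ U.injective_subtype),
      finrank_tensorProduct]
  rcases h.2 D hD with hbot | htop
  · rw [hbot, finrank_bot] at hfin
    exact .inl <| Submodule.finrank_eq_zero.mp <|
      (Nat.mul_eq_zero.mp hfin.symm).resolve_left hV.ne'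
  · rw [htop, finrank_top, finrank_tensorProduct] at hfin
    exact .inr (Submodule.eq_top_of_finrank_eq (Nat.eq_of_mul_eq_mul_left hV hfin).symm)

end Representation

theorem irreducible_of_prod_iso_extTprod_general {G H M : Type} [Group G] [Fintype G] [Group H]
    [AddCommGroup M] [Module ℂ M] [FiniteDimensional ℂ M]
    (ρ : Representation ℂ (G × H) M) (hρ : ρ.IsIrreducible') :
    ∃ (V W : Type) (_ : AddCommGroup V) (_ : Module ℂ V) (_ : AddCommGroup W) (_ : Module ℂ W)
      (σ : Representation ℂ G V) (τ : Representation ℂ H W),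
      FiniteDimensional ℂ V ∧ FiniteDimensional ℂ W ∧
      σ.IsIrreducible' ∧ τ.IsIrreducible' ∧ ρ.Iso (σ.extTprod τ) := by
  have := hρ.1
  obtain ⟨S, hS⟩ := IsAtomic.exists_atom (Subrepresentation (ρ.comp (MonoidHom.inl G H)))
  have hσ := Subrepresentation.isIrreducible'_toRepresentation_of_isAtom hS
  have := hσ.isIrreducible
  have hS0 : S.subtype ≠ 0 := fun h => by
    obtain ⟨v, hv⟩ := @exists_ne _ hσ.1 0
    exact hv (Subtype.ext congr(($h) v))
  let e := Representation.IntertwiningMap.ofBijective (ρ.multiplicityEval S.toRepresentation)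
    ⟨Representation.evalTensor_injective _ _, ρ.multiplicityEval_surjective _ hρ _ hS0⟩
  have hiso := e.symm.iso
  exact ⟨S.toSubmodule, _, _, _, _, _, _, _, inferInstance, inferInstance, hσ,
    (hρ.of_iso hiso).of_extTprod_right, hiso⟩

/-- Every irreducible finite-dimensional complex representation of a product `G × H` of
finite groups is isomorphic to an external tensor product `V ⊠ W` of an irreducible
representation of `G` and an irreducible representation of `H`. -/
theorem irreducible_of_prod_iso_extTprod {G H M : Type} [Group G] [Fintype G] [Group H]
    [Fintype H] [AddCommGroup M] [Module ℂ M] [FiniteDimensional ℂ M]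
    (ρ : Representation ℂ (G × H) M) (hρ : ρ.IsIrreducible') :
    ∃ (V W : Type) (_ : AddCommGroup V) (_ : Module ℂ V) (_ : AddCommGroup W) (_ : Module ℂ W)
      (σ : Representation ℂ G V) (τ : Representation ℂ H W),
      FiniteDimensional ℂ V ∧ FiniteDimensional ℂ W ∧
      σ.IsIrreducible' ∧ τ.IsIrreducible' ∧ ρ.Iso (σ.extTprod τ) :=
  irreducible_of_prod_iso_extTprod_general ρ hρ
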